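/- Let d > 3 and assume b is continuously differentiable on the open set Σ_{2,χ} and that the set {σ ∈ Σ2 : the Fréchet derivative Db(σ) : ℝ^d → ℂ is not of the form x ↦ c·⟨π_σ ν, x⟩ for any c ∈ ℂ} is dense in Σ2. Then every continuous solution g : ℝ^d → ℂ of the homogeneous system satisfies g(y) = 0 for all y ∈ Y1 ∪ Y2. -/

import Mathlib

open Set MeasureTheory
open scoped RealInnerProductSpace
open Filter Topology
open scoped Real

noncomputable section

abbrev Euc (d : ℕ) := EuclideanSpace ℝ (Fin d)

/-- Reflection across the hyperplane `ν^⊥` (Householder transform). -/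
def Hr {d : ℕ} (ν x : Euc d) : Euc d := x - (2 * ⟪x, ν⟫) • ν

/-- Open hemisphere of radius `k0` in direction `v`. -/
def Shemi {d : ℕ} (k0 : ℝ) (v : Euc d) : Set (Euc d) := {x | ‖x‖ = k0 ∧ 0 < ⟪x, v⟫}

def Sig1 {d : ℕ} (k0 : ℝ) (ν ω : Euc d) : Set (Euc d) :=
  {σ | σ ∈ Shemi k0 ω ∧ Hr ν σ ∉ Shemi k0 ω}

def Sig2 {d : ℕ} (k0 : ℝ) (ν ω : Euc d) : Set (Euc d) :=
  {σ | σ ∈ Shemi k0 ω ∧ Hr ν σ ∈ Shemi k0 ω}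

def Y1set {d : ℕ} (k0 : ℝ) (ν ω e : Euc d) : Set (Euc d) :=
  {y | ∃ η ∈ Shemi k0 e, ∃ σ ∈ Sig1 k0 ν ω, y = η - σ}

def Y2set {d : ℕ} (k0 : ℝ) (ν ω e : Euc d) : Set (Euc d) :=
  {y | ∃ η ∈ Shemi k0 e, ∃ σ ∈ Sig2 k0 ν ω, y = η - σ}

def Sig2chi {d : ℕ} (k0 χ : ℝ) (ν ω : Euc d) : Set (Euc d) :=
  {x | ∃ σ ∈ Sig2 k0 ν ω, ∃ t ∈ Set.Ioo (1 - χ) (1 + χ), x = t • σ}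

/-- The hypotheses on the coefficient function `b`. -/
def BHyp {d : ℕ} (k0 χ : ℝ) (ν ω : Euc d) (b : Euc d → ℂ) : Prop :=
  (∀ x ∈ Sig2chi k0 χ ν ω, b x ≠ 0) ∧
  ∀ σ ∈ Sig2 k0 ν ω, ∀ t ∈ Set.Ioo (1 - χ) (1 + χ), b (t • σ) = b σ

/-- `g` solves the homogeneous system. -/
def SolvesHom {d : ℕ} (k0 : ℝ) (ν ω e : Euc d) (b g : Euc d → ℂ) : Prop :=
  ∀ η ∈ Shemi k0 e,
    (∀ σ ∈ Sig1 k0 ν ω, g (η - σ) = 0) ∧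
    ∀ σ ∈ Sig2 k0 ν ω, b σ * g (η - σ) + g (η - Hr ν σ) = 0

/-- The coupling set `F_y`. -/
def Fcoup {d : ℕ} (k0 : ℝ) (ν ω e : Euc d) (y : Euc d) : Set (Euc d) :=
  {z | ∃ η ∈ Shemi k0 e, ∃ σ ∈ Sig2 k0 ν ω, y = η - σ ∧ z = η - Hr ν σ}

/-- The set `C_{y,λ}`. -/
def Cset {d : ℕ} (k0 : ℝ) (ν ω e : Euc d) (y : Euc d) (lam : ℝ) : Set (Euc d) :=
  {σ | σ ∈ Sig2 k0 ν ω ∧ σ + y ∈ Shemi k0 e ∧ ⟪σ, ν⟫ = lam}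

/-- The `d`-th standard basis vector. -/
def eLast (d : ℕ) (hd : 0 < d) : Euc d :=
  EuclideanSpace.single ⟨d - 1, Nat.sub_lt hd one_pos⟩ 1

def e2 : Euc 2 := EuclideanSpace.single 1 1
def e3 : Euc 3 := EuclideanSpace.single 2 1

/-- Degenerate points. -/
def degS {d : ℕ} (k0 : ℝ) (ν ω e : Euc d) : Set (Euc d) :=
  {y | ∃ η ∈ Shemi k0 e, ∃ σ ∈ Sig2 k0 ν ω, (⟪η, ν⟫ = 0 ∨ ⟪σ, ν⟫ = 0) ∧ y = η - σ}

/-- Non-degenerate points `Y2'`. -/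
def Y2nd {d : ℕ} (k0 : ℝ) (ν ω e : Euc d) : Set (Euc d) :=
  (Y2set k0 ν ω e ∩ {x | ‖x‖ < 2 * k0}) \
    (degS k0 ν ω e ∪ {x | ⟪x, ν⟫ = 0} ∪ {x | ∃ t : ℝ, x = t • ν})

/-- The set `Ỹ`. -/
def Ytil {d : ℕ} (k0 : ℝ) (ν ω e : Euc d) : Set (Euc d) :=
  {y | ∃ η ∈ Shemi k0 e, -η ∈ Sig1 k0 ν ω ∧
    ∃ σ ∈ Sig2 k0 ν ω, σ ∈ Shemi k0 (-e) ∧ Hr ν σ ∉ Shemi k0 (-e) ∧ y = η - Hr ν σ}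

/-- Cross product on `Euc 3`. -/
def cross3 (a b : Euc 3) : Euc 3 :=
  (EuclideanSpace.equiv (Fin 3) ℝ).symm
    ![a 1 * b 2 - a 2 * b 1, a 2 * b 0 - a 0 * b 2, a 0 * b 1 - a 1 * b 0]

end

section Aux

variable {d : ℕ}

lemma norm_eq_of_sq_eq {a c : ℝ} (ha : 0 ≤ a) (hc : 0 ≤ c) (h : a ^ 2 = c ^ 2) : a = c := by
  have := Real.sqrt_sq ha
  rw [← this, h, Real.sqrt_sq hc]

lemma hr_smul (ν : Euc d) (c : ℝ) (x : Euc d) : Hr ν (c • x) = c • Hr ν x := by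
  simp only [Hr, real_inner_smul_left, smul_sub, smul_smul]
  ring_nf

lemma hr_norm {ν : Euc d} (hν : ‖ν‖ = 1) (x : Euc d) : ‖Hr ν x‖ = ‖x‖ := by
  apply norm_eq_of_sq_eq (norm_nonneg _) (norm_nonneg _)
  have h1 : ‖x - (2 * ⟪x, ν⟫) • ν‖ ^ 2
      = ‖x‖ ^ 2 - 2 * ⟪x, (2 * ⟪x, ν⟫) • ν⟫ + ‖(2 * ⟪x, ν⟫) • ν‖ ^ 2 := norm_sub_sq_real x _
  have h2 : ⟪x, (2 * ⟪x, ν⟫) • ν⟫ = (2 * ⟪x, ν⟫) * ⟪x, ν⟫ := real_inner_smul_right x ν _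
  have h3 : ‖(2 * ⟪x, ν⟫) • ν‖ ^ 2 = (2 * ⟪x, ν⟫) ^ 2 := by
    rw [norm_smul, hν, mul_one, Real.norm_eq_abs, sq_abs]
  rw [Hr, h1, h2, h3]
  ring

lemma hr_continuous (ν : Euc d) : Continuous (Hr ν) := by
  unfold Hr
  exact continuous_id.sub (by fun_prop)

lemma sig2chi_mem_nhds {k0 χ : ℝ} (hk0 : 0 < k0) (hχ0 : 0 < χ) (hχ1 : χ < 1)
    {ν ω σ' : Euc d} (hν : ‖ν‖ = 1) (hσ : σ' ∈ Sig2 k0 ν ω) :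
    Sig2chi k0 χ ν ω ∈ 𝓝 σ' := by
  set U : Set (Euc d) :=
    ({x | k0 * (1 - χ) < ‖x‖} ∩ {x | ‖x‖ < k0 * (1 + χ)}) ∩
      ({x | 0 < ⟪x, ω⟫} ∩ {x | 0 < ⟪Hr ν x, ω⟫}) with hU
  have hUopen : IsOpen U := by
    have h1 : IsOpen {x : Euc d | k0 * (1 - χ) < ‖x‖} := isOpen_lt continuous_const continuous_norm
    have h2 : IsOpen {x : Euc d | ‖x‖ < k0 * (1 + χ)} := isOpen_lt continuous_norm continuous_const
    have h3 : IsOpen {x : Euc d | 0 < ⟪x, ω⟫} :=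
      isOpen_lt continuous_const (continuous_id.inner continuous_const)
    have h4 : IsOpen {x : Euc d | 0 < ⟪Hr ν x, ω⟫} :=
      isOpen_lt continuous_const ((hr_continuous ν).inner continuous_const)
    exact (h1.inter h2).inter (h3.inter h4)
  have hmem : σ' ∈ U := by
    obtain ⟨⟨hn, hi⟩, ⟨hn2, hi2⟩⟩ := hσ
    refine ⟨⟨?_, ?_⟩, hi, hi2⟩ <;> simp only [Set.mem_setOf_eq] <;> rw [hn] <;> nlinarith
  refine Filter.mem_of_superset (hUopen.mem_nhds hmem) ?_
  rintro x ⟨⟨hx1, hx2⟩, hx3, hx4⟩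
  simp only [Set.mem_setOf_eq] at hx1 hx2 hx3 hx4
  have hxn : 0 < ‖x‖ := lt_of_le_of_lt (by nlinarith) hx1
  refine ⟨(k0 / ‖x‖) • x, ⟨⟨?_, ?_⟩, ?_, ?_⟩, ‖x‖ / k0, ⟨?_, ?_⟩, ?_⟩
  · rw [norm_smul, Real.norm_eq_abs, abs_of_pos (by positivity)]; field_simp
  · rw [real_inner_smul_left]; positivity
  · rw [hr_smul, norm_smul, hr_norm hν, Real.norm_eq_abs, abs_of_pos (by positivity)]; field_simp
  · rw [hr_smul, real_inner_smul_left]; positivity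
  · rw [lt_div_iff₀ hk0]; linarith [hx1]
  · rw [div_lt_iff₀ hk0]; linarith [hx2]
  · rw [smul_smul]; field_simp; exact (one_smul ℝ x).symm

lemma b_diffAt {k0 χ : ℝ} (hk0 : 0 < k0) (hχ0 : 0 < χ) (hχ1 : χ < 1)
    {ν ω σ' : Euc d} (hν : ‖ν‖ = 1) (hσ : σ' ∈ Sig2 k0 ν ω)
    {b : Euc d → ℂ} (hb1 : ContDiffOn ℝ 1 b (Sig2chi k0 χ ν ω)) :
    DifferentiableAt ℝ b σ' := by
  have h := hb1.differentiableOn one_ne_zero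
  exact h.differentiableAt (sig2chi_mem_nhds hk0 hχ0 hχ1 hν hσ)

lemma sig2_subset_chi {k0 χ : ℝ} (hχ0 : 0 < χ) {ν ω : Euc d} :
    Sig2 k0 ν ω ⊆ Sig2chi k0 χ ν ω := by
  intro σ hσ
  exact ⟨σ, hσ, 1, ⟨by linarith, by linarith⟩, (one_smul ℝ σ).symm⟩

lemma fderiv_radial {k0 χ : ℝ} (hk0 : 0 < k0) (hχ0 : 0 < χ) (hχ1 : χ < 1)
    {ν ω σ' : Euc d} (hν : ‖ν‖ = 1) (hσ : σ' ∈ Sig2 k0 ν ω)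
    {b : Euc d → ℂ} (hb : BHyp k0 χ ν ω b) (hb1 : ContDiffOn ℝ 1 b (Sig2chi k0 χ ν ω)) :
    fderiv ℝ b σ' σ' = 0 := by
  have hdiff := b_diffAt hk0 hχ0 hχ1 hν hσ hb1
  have hcurve : HasDerivAt (fun t : ℝ => t • σ') ((1 : ℝ) • σ') 1 :=
    (hasDerivAt_id 1).smul_const σ'
  have hF : HasFDerivAt b (fderiv ℝ b σ') ((1 : ℝ) • σ') := by
    rw [one_smul]; exact hdiff.hasFDerivAt
  have hcomp : HasDerivAt (fun t : ℝ => b (t • σ')) (fderiv ℝ b σ' ((1 : ℝ) • σ')) 1 :=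
    hF.comp_hasDerivAt 1 hcurve
  have hconst : (fun t : ℝ => b (t • σ')) =ᶠ[𝓝 1] fun _ => b σ' := by
    filter_upwards [Ioo_mem_nhds (by linarith : 1 - χ < (1:ℝ)) (by linarith : (1:ℝ) < 1 + χ)]
      with t ht using hb.2 σ' hσ t ht
  have h0 : HasDerivAt (fun t : ℝ => b (t • σ')) 0 1 :=
    (hasDerivAt_const (1:ℝ) (b σ')).congr_of_eventuallyEq hconst
  have := h0.unique hcomp
  rw [one_smul] at this
  exact this.symm

end Aux

section Aux2

variable {d : ℕ}

lemma mem_span_triple {u a b c : Euc d} :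
    u ∈ Submodule.span ℝ ({a, b, c} : Set (Euc d)) ↔ ∃ p q r : ℝ, u = p • a + q • b + r • c := by
  constructor
  · intro h
    rw [show ({a, b, c} : Set (Euc d)) = insert a {b, c} from rfl,
      Submodule.mem_span_insert] at h
    obtain ⟨p, z, hz, rfl⟩ := h
    rw [show ({b, c} : Set (Euc d)) = insert b {c} from rfl, Submodule.mem_span_insert] at hz
    obtain ⟨q, z', hz', rfl⟩ := hz
    rw [Submodule.mem_span_singleton] at hz'
    obtain ⟨r, rfl⟩ := hz'
    exact ⟨p, q, r, by rw [add_assoc]⟩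
  · rintro ⟨p, q, r, rfl⟩
    refine Submodule.add_mem _ (Submodule.add_mem _ ?_ ?_) ?_ <;>
      exact Submodule.smul_mem _ _ (Submodule.subset_span (by simp))

lemma exists_perp (hd : 3 < d) (v₁ v₂ v₃ : Euc d) :
    ∃ w : Euc d, w ≠ 0 ∧ ⟪v₁, w⟫ = 0 ∧ ⟪v₂, w⟫ = 0 ∧ ⟪v₃, w⟫ = 0 := by
  set L : Euc d →ₗ[ℝ] ℝ × ℝ × ℝ :=
    LinearMap.prod (innerSL ℝ v₁).toLinearMap
      (LinearMap.prod (innerSL ℝ v₂).toLinearMap (innerSL ℝ v₃).toLinearMap) with hL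
  have hk : LinearMap.ker L ≠ ⊥ := by
    intro hbot
    have h1 := LinearMap.finrank_range_add_finrank_ker L
    rw [hbot, finrank_bot, add_zero, finrank_euclideanSpace_fin] at h1
    have h2 : Module.finrank ℝ (LinearMap.range L) ≤ Module.finrank ℝ (ℝ × ℝ × ℝ) :=
      Submodule.finrank_le _
    have h3 : Module.finrank ℝ (ℝ × ℝ × ℝ) = 3 := by
      simp [Module.finrank_prod]
    omega
  obtain ⟨w, hw, hw0⟩ := Submodule.exists_mem_ne_zero_of_ne_bot hk
  have hker := LinearMap.mem_ker.mp hw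
  rw [hL] at hker
  simp only [LinearMap.prod_apply, Function.prod, ContinuousLinearMap.coe_coe, innerSL_apply_apply,
    Prod.mk_eq_zero] at hker
  exact ⟨w, hw0, hker.1, hker.2.1, hker.2.2⟩

lemma pick_off_span (hd : 3 < d) {k0 : ℝ} (hk0 : 0 < k0)
    {S : Set (Euc d)} (hS : IsOpen S) {η₀ : Euc d} (hη₀ : η₀ ∈ S) (hn : ‖η₀‖ = k0)
    (v₁ v₂ v₃ : Euc d) :
    ∃ η, ‖η‖ = k0 ∧ η ∈ S ∧ η ∉ Submodule.span ℝ ({v₁, v₂, v₃} : Set (Euc d)) := by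
  by_cases hmem : η₀ ∈ Submodule.span ℝ ({v₁, v₂, v₃} : Set (Euc d))
  swap
  · exact ⟨η₀, hn, hη₀, hmem⟩
  obtain ⟨w, hw0, h1, h2, h3⟩ := exists_perp hd v₁ v₂ v₃
  have hwspan : ∀ u ∈ Submodule.span ℝ ({v₁, v₂, v₃} : Set (Euc d)), ⟪u, w⟫ = 0 := by
    intro u hu
    obtain ⟨pp, qq, rr, rfl⟩ := mem_span_triple.mp hu
    simp only [inner_add_left, real_inner_smul_left, h1, h2, h3, mul_zero, add_zero, zero_add]
  have hwn : (0:ℝ) < ‖w‖ := norm_pos_iff.mpr hw0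
  set w' : Euc d := (k0 / ‖w‖) • w with hw'
  have hw'span : ∀ u ∈ Submodule.span ℝ ({v₁, v₂, v₃} : Set (Euc d)), ⟪u, w'⟫ = 0 := by
    intro u hu; rw [hw', real_inner_smul_right, hwspan u hu, mul_zero]
  have hw'n : ‖w'‖ = k0 := by
    rw [hw', norm_smul, Real.norm_eq_abs, abs_of_pos (by positivity)]; field_simp
  set δ : ℝ → Euc d := fun s => Real.cos s • η₀ + Real.sin s • w' with hδ
  have hδc : Continuous δ := (Real.continuous_cos.smul continuous_const).add
    (Real.continuous_sin.smul continuous_const)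
  have hδ0 : δ 0 = η₀ := by simp [hδ]
  have h0T : (0:ℝ) ∈ δ ⁻¹' S := by simp [Set.mem_preimage, hδ0, hη₀]
  obtain ⟨ε, hε, hball⟩ := Metric.isOpen_iff.mp (hS.preimage hδc) 0 h0T
  set s₀ : ℝ := min (ε / 2) 1 with hs₀
  have hs₀pos : 0 < s₀ := lt_min (by linarith) one_pos
  have hs₀lt : s₀ < π := lt_of_le_of_lt (min_le_right _ _) (by linarith [Real.pi_gt_three])
  have hsin : 0 < Real.sin s₀ := Real.sin_pos_of_pos_of_lt_pi hs₀pos hs₀lt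
  have hδs₀S : δ s₀ ∈ S := by
    apply hball
    rw [Metric.mem_ball, Real.dist_eq, sub_zero, abs_of_pos hs₀pos]
    exact lt_of_le_of_lt (min_le_left _ _) (by linarith)
  have hperp : ⟪η₀, w'⟫ = 0 := hw'span η₀ hmem
  have hδn : ‖δ s₀‖ = k0 := by
    apply norm_eq_of_sq_eq (norm_nonneg _) (le_of_lt hk0)
    rw [hδ]
    simp only []
    rw [norm_add_sq_real, real_inner_smul_left, real_inner_smul_right, hperp, norm_smul,
      norm_smul, hn, hw'n]
    simp only [Real.norm_eq_abs, mul_pow, sq_abs, mul_zero]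
    nlinarith [Real.sin_sq_add_cos_sq s₀]
  refine ⟨δ s₀, hδn, hδs₀S, ?_⟩
  intro hc
  have hwmem : w' ∈ Submodule.span ℝ ({v₁, v₂, v₃} : Set (Euc d)) := by
    have he1 : Real.sin s₀ • w' = δ s₀ - Real.cos s₀ • η₀ := by rw [hδ]; simp
    have he2 : Real.sin s₀ • w' ∈ Submodule.span ℝ ({v₁, v₂, v₃} : Set (Euc d)) := by
      rw [he1]; exact Submodule.sub_mem _ hc (Submodule.smul_mem _ _ hmem)
    have := Submodule.smul_mem _ (Real.sin s₀)⁻¹ he2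
    rwa [smul_smul, inv_mul_cancel₀ (ne_of_gt hsin), one_smul] at this
  have hww := hw'span w' hwmem
  rw [real_inner_self_eq_norm_sq, hw'n] at hww
  nlinarith

end Aux2

section Aux3

variable {d : ℕ}

lemma slice_vanish {k0 χ : ℝ} (hk0 : 0 < k0) (hχ0 : 0 < χ) (hχ1 : χ < 1)
    {ν ω e : Euc d} (hν : ‖ν‖ = 1)
    {b g : Euc d → ℂ} (hb : BHyp k0 χ ν ω b) (hb1 : ContDiffOn ℝ 1 b (Sig2chi k0 χ ν ω))
    (hg : SolvesHom k0 ν ω e b g)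
    {σ' η' : Euc d} (hσ : σ' ∈ Sig2 k0 ν ω) (hη : η' ∈ Shemi k0 e)
    (hgne : g (η' - σ') ≠ 0)
    (hns : σ' ∉ Submodule.span ℝ ({η' - σ', ν} : Set (Euc d)))
    (x : Euc d) (hx1 : ⟪x, σ'⟫ = 0) (hx2 : ⟪x, η' - σ'⟫ = 0) (hx3 : ⟪x, ν⟫ = 0) :
    fderiv ℝ b σ' x = 0 := by
  rcases eq_or_ne x 0 with rfl | hx0
  · simp
  set y := η' - σ' with hy
  have hσy : σ' + y = η' := by rw [hy]; abel
  set K := Submodule.span ℝ ({y, ν} : Set (Euc d)) with hK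
  set q : Euc d := (Submodule.orthogonalProjectionOnto K σ' : Euc d) with hq
  set p : Euc d := σ' - q with hp
  have hqK : q ∈ K := (Submodule.orthogonalProjectionOnto K σ').2
  have hyK : y ∈ K := Submodule.subset_span (by simp)
  have hνK : ν ∈ K := Submodule.subset_span (by simp)
  have hinner : ∀ u ∈ K, ⟪u, p⟫ = 0 :=
    (Submodule.mem_orthogonal K p).mp (Submodule.sub_starProjection_mem_orthogonal (K := K) σ')
  have hp0 : p ≠ 0 := by
    intro h
    apply hns
    have hσq : σ' = q := by rwa [hp, sub_eq_zero] at h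
    rw [hσq]; exact hqK
  have hpy : ⟪p, y⟫ = 0 := by rw [real_inner_comm]; exact hinner y hyK
  have hpν : ⟪p, ν⟫ = 0 := by rw [real_inner_comm]; exact hinner ν hνK
  have hqp : ⟪q, p⟫ = 0 := hinner q hqK
  have hpq : ⟪p, q⟫ = 0 := by rw [real_inner_comm]; exact hqp
  have hyx : ⟪y, x⟫ = 0 := by rw [real_inner_comm]; exact hx2
  have hνx : ⟪ν, x⟫ = 0 := by rw [real_inner_comm]; exact hx3
  have hxK : ∀ u ∈ K, ⟪u, x⟫ = 0 := by
    intro u hu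
    obtain ⟨a, b', rfl⟩ := Submodule.mem_span_pair.mp hu
    rw [inner_add_left, real_inner_smul_left, real_inner_smul_left, hyx, hνx]
    ring
  have hqx : ⟪q, x⟫ = 0 := hxK q hqK
  have hxq : ⟪x, q⟫ = 0 := by rw [real_inner_comm]; exact hqx
  have hxp : ⟪x, p⟫ = 0 := by rw [hp, inner_sub_right, hx1, hxq, sub_zero]
  have hpx : ⟪p, x⟫ = 0 := by rw [real_inner_comm]; exact hxp
  have hσn : ‖σ'‖ = k0 := hσ.1.1
  have hxn : (0:ℝ) < ‖x‖ := norm_pos_iff.mpr hx0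
  have hpn : (0:ℝ) < ‖p‖ := norm_pos_iff.mpr hp0
  set r : ℝ := ‖p‖ / ‖x‖ with hr
  have hrpos : 0 < r := by positivity
  have hrx : r * ‖x‖ = ‖p‖ := by rw [hr]; field_simp
  set γ : ℝ → Euc d := fun t => q + (Real.cos t • p + (r * Real.sin t) • x) with hγ
  have hγ0 : γ 0 = σ' := by rw [hγ]; simp [hp]
  have hγc : Continuous γ := continuous_const.add
    ((Real.continuous_cos.smul continuous_const).add
      ((continuous_const.mul Real.continuous_sin).smul continuous_const))
  have hσqp : σ' = q + p := by rw [hp]; abel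
  have hqpy : ⟪σ', y⟫ = ⟪q, y⟫ := by rw [hσqp, inner_add_left, hpy, add_zero]
  have hqpν : ⟪σ', ν⟫ = ⟪q, ν⟫ := by rw [hσqp, inner_add_left, hpν, add_zero]
  have hiy : ∀ t, ⟪γ t, y⟫ = ⟪σ', y⟫ := by
    intro t
    rw [hγ]
    simp only [inner_add_left, real_inner_smul_left]
    rw [hpy, hx2, hqpy]
    ring
  have hiν : ∀ t, ⟪γ t, ν⟫ = ⟪σ', ν⟫ := by
    intro t
    rw [hγ]
    simp only [inner_add_left, real_inner_smul_left]
    rw [hpν, hx3, hqpν]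
    ring
  have hσ2 : ‖q‖ ^ 2 + ‖p‖ ^ 2 = k0 ^ 2 := by
    rw [← hσn, hσqp, norm_add_sq_real, hqp]; ring
  have expand : ∀ a c : ℝ, ‖q + (a • p + c • x)‖ ^ 2
      = ‖q‖ ^ 2 + a ^ 2 * ‖p‖ ^ 2 + c ^ 2 * ‖x‖ ^ 2 := by
    intro a c
    rw [norm_add_sq_real, norm_add_sq_real]
    rw [inner_add_right, real_inner_smul_right, real_inner_smul_right, hqp, hqx,
      real_inner_smul_left, real_inner_smul_right, hpx]
    rw [norm_smul, norm_smul, Real.norm_eq_abs, Real.norm_eq_abs, mul_pow, mul_pow,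
      sq_abs, sq_abs]
    ring
  have hγnorm : ∀ t, ‖γ t‖ = k0 := by
    intro t
    apply norm_eq_of_sq_eq (norm_nonneg _) (le_of_lt hk0)
    rw [hγ]
    simp only []
    rw [expand (Real.cos t) (r * Real.sin t)]
    have h2 : (r * Real.sin t) ^ 2 * ‖x‖ ^ 2 = Real.sin t ^ 2 * ‖p‖ ^ 2 := by
      rw [← hrx]; ring
    have h3 : Real.cos t ^ 2 * ‖p‖ ^ 2 + Real.sin t ^ 2 * ‖p‖ ^ 2 = ‖p‖ ^ 2 := by
      linear_combination (‖p‖ ^ 2) * (Real.sin_sq_add_cos_sq t)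
    linarith
  have hγnormy : ∀ t, ‖γ t + y‖ = k0 := by
    intro t
    apply norm_eq_of_sq_eq (norm_nonneg _) (le_of_lt hk0)
    rw [norm_add_sq_real, hiy t, hγnorm t]
    have hh : ‖η'‖ ^ 2 = k0 ^ 2 + 2 * ⟪σ', y⟫ + ‖y‖ ^ 2 := by
      rw [← hσy, norm_add_sq_real, hσn]
    have hh2 : ‖η'‖ = k0 := hη.1
    rw [hh2] at hh
    linarith
  set T : Set ℝ := ((fun t => ⟪γ t, ω⟫) ⁻¹' Set.Ioi 0) ∩
      (((fun t => ⟪Hr ν (γ t), ω⟫) ⁻¹' Set.Ioi 0) ∩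
       ((fun t => ⟪γ t + y, e⟫) ⁻¹' Set.Ioi 0)) with hT
  have hTopen : IsOpen T := by
    refine IsOpen.inter ?_ (IsOpen.inter ?_ ?_)
    · exact isOpen_Ioi.preimage (hγc.inner continuous_const)
    · exact isOpen_Ioi.preimage (((hr_continuous ν).comp hγc).inner continuous_const)
    · exact isOpen_Ioi.preimage ((hγc.add continuous_const).inner continuous_const)
  have h0T : (0:ℝ) ∈ T := by
    refine ⟨?_, ?_, ?_⟩ <;> simp only [Set.mem_preimage, Set.mem_Ioi, hγ0]
    · exact hσ.1.2
    · exact hσ.2.2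
    · rw [hσy]; exact hη.2
  have hmemSig : ∀ t ∈ T, γ t ∈ Sig2 k0 ν ω := by
    rintro t ⟨h1, h2, _⟩
    exact ⟨⟨hγnorm t, h1⟩, ⟨by rw [hr_norm hν]; exact hγnorm t, h2⟩⟩
  have hmemShem : ∀ t ∈ T, γ t + y ∈ Shemi k0 e := by
    rintro t ⟨_, _, h3⟩
    exact ⟨hγnormy t, h3⟩
  have heq : ∀ t ∈ T, b (γ t) * g y + g (y + (2 * ⟪σ', ν⟫) • ν) = 0 := by
    intro t ht
    have h := (hg (γ t + y) (hmemShem t ht)).2 (γ t) (hmemSig t ht)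
    have e1 : γ t + y - γ t = y := by abel
    have e2 : γ t + y - Hr ν (γ t) = y + (2 * ⟪σ', ν⟫) • ν := by
      rw [Hr, hiν t]; abel
    rwa [e1, e2] at h
  have hbconst : ∀ t ∈ T, b (γ t) = b σ' := by
    intro t ht
    have h1 := heq t ht
    have h2 := heq 0 h0T
    rw [hγ0] at h2
    have h3 : b (γ t) * g y = b σ' * g y := by linear_combination h1 - h2
    exact mul_right_cancel₀ hgne h3
  have hTmem : T ∈ 𝓝 (0:ℝ) := hTopen.mem_nhds h0T
  have hev : (fun t => b (γ t)) =ᶠ[𝓝 (0:ℝ)] fun _ => b σ' := by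
    filter_upwards [hTmem] with t ht using hbconst t ht
  have hd1 : HasDerivAt (fun t => Real.cos t • p) ((-Real.sin 0) • p) 0 :=
    (Real.hasDerivAt_cos 0).smul_const p
  have hd2 : HasDerivAt (fun t => (r * Real.sin t) • x) ((r * Real.cos 0) • x) 0 :=
    ((Real.hasDerivAt_sin 0).const_mul r).smul_const x
  have hdγ : HasDerivAt γ (r • x) 0 := by
    have h := (hd1.add hd2).const_add q
    rw [hγ]
    simpa using h
  have hdiff := b_diffAt hk0 hχ0 hχ1 hν hσ hb1
  have hF : HasFDerivAt b (fderiv ℝ b σ') (γ 0) := by rw [hγ0]; exact hdiff.hasFDerivAt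
  have hcomp : HasDerivAt (fun t => b (γ t)) (fderiv ℝ b σ' (r • x)) 0 :=
    hF.comp_hasDerivAt 0 hdγ
  have hzero : HasDerivAt (fun t => b (γ t)) 0 0 :=
    (hasDerivAt_const (0:ℝ) (b σ')).congr_of_eventuallyEq hev
  have huniq : fderiv ℝ b σ' (r • x) = 0 := (hzero.unique hcomp).symm
  rw [ContinuousLinearMap.map_smul] at huniq
  rcases smul_eq_zero.mp huniq with h | h
  · exact absurd h (ne_of_gt hrpos)
  · exact h

end Aux3

section Aux4

variable {d : ℕ}

lemma sig2_not_span_nu {k0 : ℝ} (hk0 : 0 < k0) {ν ω : Euc d} (hν : ‖ν‖ = 1)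
    {σ' : Euc d} (hσ : σ' ∈ Sig2 k0 ν ω) : σ' ∉ Submodule.span ℝ ({ν} : Set (Euc d)) := by
  intro h
  obtain ⟨a, ha⟩ := Submodule.mem_span_singleton.mp h
  have hνν : ⟪ν, ν⟫ = 1 := by
    rw [real_inner_self_eq_norm_sq, hν]; norm_num
  have hH : Hr ν (a • ν) = -(a • ν) := by
    rw [Hr, real_inner_smul_left, hνν, mul_one, ← sub_smul]
    rw [show a - 2 * a = -a by ring, neg_smul]
  have h1 := hσ.1.2
  have h2 := hσ.2.2
  rw [← ha, hH, inner_neg_left] at h2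
  rw [← ha] at h1
  linarith

lemma not_span_shift {σ' ν η : Euc d}
    (h1 : η ∉ Submodule.span ℝ ({σ', ν} : Set (Euc d)))
    (h2 : σ' ∉ Submodule.span ℝ ({ν} : Set (Euc d))) :
    σ' ∉ Submodule.span ℝ ({η - σ', ν} : Set (Euc d)) := by
  intro h
  obtain ⟨a, c, hac⟩ := Submodule.mem_span_pair.mp h
  rcases eq_or_ne a 0 with rfl | ha
  · apply h2
    rw [Submodule.mem_span_singleton]
    refine ⟨c, ?_⟩
    calc c • ν = (0:ℝ) • (η - σ') + c • ν := by rw [zero_smul, zero_add]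
      _ = σ' := hac
  · apply h1
    have h6 : a • η = σ' + a • σ' - c • ν := by
      calc a • η = a • (η - σ') + c • ν + (a • σ' - c • ν) := by rw [smul_sub]; abel
        _ = σ' + (a • σ' - c • ν) := by rw [hac]
        _ = σ' + a • σ' - c • ν := by abel
    have h7 : η = a⁻¹ • (σ' + a • σ' - c • ν) := by rw [← h6, inv_smul_smul₀ ha]
    rw [h7]
    have hσmem : σ' ∈ Submodule.span ℝ ({σ', ν} : Set (Euc d)) :=
      Submodule.subset_span (by simp)
    have hνmem : ν ∈ Submodule.span ℝ ({σ', ν} : Set (Euc d)) :=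
      Submodule.subset_span (by simp)
    exact Submodule.smul_mem _ _ (Submodule.sub_mem _
      (Submodule.add_mem _ hσmem (Submodule.smul_mem _ _ hσmem)) (Submodule.smul_mem _ _ hνmem))

lemma span_exchange {σ' ν η₁ η₂ : Euc d}
    (h1 : η₁ ∈ Submodule.span ℝ ({σ', ν, η₂} : Set (Euc d)))
    (h2 : η₁ ∉ Submodule.span ℝ ({σ', ν} : Set (Euc d))) :
    η₂ ∈ Submodule.span ℝ ({σ', ν, η₁} : Set (Euc d)) := by
  obtain ⟨p, q, r, hpqr⟩ := mem_span_triple.mp h1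
  rcases eq_or_ne r 0 with rfl | hr
  · exfalso
    apply h2
    rw [Submodule.mem_span_pair]
    exact ⟨p, q, by rw [hpqr, zero_smul, add_zero]⟩
  · have h6 : r • η₂ = η₁ - p • σ' - q • ν := by rw [hpqr]; abel
    have h7 : η₂ = r⁻¹ • (η₁ - p • σ' - q • ν) := by rw [← h6, inv_smul_smul₀ hr]
    rw [h7]
    have m1 : η₁ ∈ Submodule.span ℝ ({σ', ν, η₁} : Set (Euc d)) :=
      Submodule.subset_span (by simp)
    have m2 : σ' ∈ Submodule.span ℝ ({σ', ν, η₁} : Set (Euc d)) :=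
      Submodule.subset_span (by simp)
    have m3 : ν ∈ Submodule.span ℝ ({σ', ν, η₁} : Set (Euc d)) :=
      Submodule.subset_span (by simp)
    exact Submodule.smul_mem _ _ (Submodule.sub_mem _
      (Submodule.sub_mem _ m1 (Submodule.smul_mem _ _ m2)) (Submodule.smul_mem _ _ m3))

end Aux4

section Aux5

variable {d : ℕ}

lemma active_good (hd : 3 < d) {k0 χ : ℝ} (hk0 : 0 < k0) (hχ0 : 0 < χ) (hχ1 : χ < 1)
    {ν ω e : Euc d} (hν : ‖ν‖ = 1)
    {b g : Euc d → ℂ} (hb : BHyp k0 χ ν ω b) (hb1 : ContDiffOn ℝ 1 b (Sig2chi k0 χ ν ω))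
    (hgc : Continuous g) (hg : SolvesHom k0 ν ω e b g)
    {σ' : Euc d} (hσ : σ' ∈ Sig2 k0 ν ω)
    (hact : ∃ η ∈ Shemi k0 e, g (η - σ') ≠ 0) :
    ∃ c : ℂ, ∀ x : Euc d,
      fderiv ℝ b σ' x = c * ((⟪ν - (⟪ν, σ'⟫ / ‖σ'‖ ^ 2) • σ', x⟫ : ℝ) : ℂ) := by
  obtain ⟨η₀, hη₀, hg0⟩ := hact
  set V : Set (Euc d) := {x | 0 < ⟪x, e⟫} ∩ {x | g (x - σ') ≠ 0} with hV
  have hVopen : IsOpen V := by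
    apply IsOpen.inter
    · exact isOpen_lt continuous_const (continuous_id.inner continuous_const)
    · exact isOpen_compl_singleton.preimage (hgc.comp (continuous_id.sub continuous_const))
  have hη₀V : η₀ ∈ V := ⟨hη₀.2, hg0⟩
  obtain ⟨η₁, hη₁n, hη₁V, hη₁sp⟩ := pick_off_span hd hk0 hVopen hη₀V hη₀.1 σ' ν ν
  obtain ⟨η₂, hη₂n, hη₂V, hη₂sp⟩ := pick_off_span hd hk0 hVopen hη₁V hη₁n σ' ν η₁
  have hη₁S : η₁ ∈ Shemi k0 e := ⟨hη₁n, hη₁V.1⟩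
  have hη₂S : η₂ ∈ Shemi k0 e := ⟨hη₂n, hη₂V.1⟩
  have hg1 : g (η₁ - σ') ≠ 0 := hη₁V.2
  have hg2 : g (η₂ - σ') ≠ 0 := hη₂V.2
  have hσν : σ' ∉ Submodule.span ℝ ({ν} : Set (Euc d)) := sig2_not_span_nu hk0 hν hσ
  have hη₁p : η₁ ∉ Submodule.span ℝ ({σ', ν} : Set (Euc d)) := by
    intro h
    apply hη₁sp
    have hset : ({σ', ν, ν} : Set (Euc d)) = {σ', ν} := by
      rw [show ({σ', ν, ν} : Set (Euc d)) = insert σ' (insert ν {ν}) from rfl,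
        Set.insert_eq_self.mpr (Set.mem_singleton ν)]
    rw [hset]
    exact h
  have hη₂p : η₂ ∉ Submodule.span ℝ ({σ', ν} : Set (Euc d)) := by
    intro h
    apply hη₂sp
    refine Submodule.span_mono ?_ h
    intro z hz
    simp only [Set.mem_insert_iff, Set.mem_singleton_iff] at hz ⊢
    tauto
  have hns₁ : σ' ∉ Submodule.span ℝ ({η₁ - σ', ν} : Set (Euc d)) := not_span_shift hη₁p hσν
  have hns₂ : σ' ∉ Submodule.span ℝ ({η₂ - σ', ν} : Set (Euc d)) := not_span_shift hη₂p hσν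
  have slice₁ : ∀ x : Euc d, ⟪x, σ'⟫ = 0 → ⟪x, η₁ - σ'⟫ = 0 → ⟪x, ν⟫ = 0 →
      fderiv ℝ b σ' x = 0 :=
    fun x h1 h2 h3 => slice_vanish hk0 hχ0 hχ1 hν hb hb1 hg hσ hη₁S hg1 hns₁ x h1 h2 h3
  have slice₂ : ∀ x : Euc d, ⟪x, σ'⟫ = 0 → ⟪x, η₂ - σ'⟫ = 0 → ⟪x, ν⟫ = 0 →
      fderiv ℝ b σ' x = 0 :=
    fun x h1 h2 h3 => slice_vanish hk0 hχ0 hχ1 hν hb hb1 hg hσ hη₂S hg2 hns₂ x h1 h2 h3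
  have hσn : ‖σ'‖ = k0 := hσ.1.1
  have hσn0 : ‖σ'‖ ≠ 0 := by rw [hσn]; exact ne_of_gt hk0
  have hσσ : ⟪σ', σ'⟫ = ‖σ'‖ ^ 2 := real_inner_self_eq_norm_sq σ'
  -- the key vanishing on the orthogonal complement of {σ', ν}
  have vperp : ∀ w : Euc d, ⟪w, σ'⟫ = 0 → ⟪w, ν⟫ = 0 → fderiv ℝ b σ' w = 0 := by
    intro w hw1 hw2
    set K₂ := Submodule.span ℝ ({σ', η₂ - σ', ν} : Set (Euc d)) with hK₂
    set pr : Euc d := (Submodule.orthogonalProjectionOnto K₂ (η₁ - σ') : Euc d) with hpr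
    set pp : Euc d := (η₁ - σ') - pr with hpp
    have hprK : pr ∈ K₂ := (Submodule.orthogonalProjectionOnto K₂ (η₁ - σ')).2
    have hppO : ∀ u ∈ K₂, ⟪u, pp⟫ = 0 :=
      (Submodule.mem_orthogonal K₂ pp).mp (Submodule.sub_starProjection_mem_orthogonal (K := K₂) _)
    have hy₁notin : (η₁ - σ') ∉ K₂ := by
      intro hmem
      have hK₂le : K₂ ≤ Submodule.span ℝ ({σ', ν, η₂} : Set (Euc d)) := by
        rw [hK₂, Submodule.span_le]
        rintro z hz
        simp only [Set.mem_insert_iff, Set.mem_singleton_iff] at hz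
        rcases hz with rfl | rfl | rfl
        · exact Submodule.subset_span (by simp)
        · exact Submodule.sub_mem _ (Submodule.subset_span (by simp))
            (Submodule.subset_span (by simp))
        · exact Submodule.subset_span (by simp)
      have hη₁mem : η₁ ∈ Submodule.span ℝ ({σ', ν, η₂} : Set (Euc d)) := by
        have h1 := hK₂le hmem
        have h2 : η₁ = (η₁ - σ') + σ' := by abel
        rw [h2]
        exact Submodule.add_mem _ h1 (Submodule.subset_span (by simp))
      exact hη₂sp (span_exchange hη₁mem hη₁p)
    have hpp0 : pp ≠ 0 := by
      intro h
      apply hy₁notin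
      have : η₁ - σ' = pr := by rwa [hpp, sub_eq_zero] at h
      rw [this]; exact hprK
    have hppσ : ⟪pp, σ'⟫ = 0 := by
      rw [real_inner_comm]; exact hppO σ' (Submodule.subset_span (by simp))
    have hppy₂ : ⟪pp, η₂ - σ'⟫ = 0 := by
      rw [real_inner_comm]; exact hppO _ (Submodule.subset_span (by simp))
    have hppν : ⟪pp, ν⟫ = 0 := by
      rw [real_inner_comm]; exact hppO ν (Submodule.subset_span (by simp))
    have hDbpp : fderiv ℝ b σ' pp = 0 := slice₂ pp hppσ hppy₂ hppν
    have hppy₁ : ⟪pp, η₁ - σ'⟫ = ‖pp‖ ^ 2 := by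
      have hsplit : η₁ - σ' = pp + pr := by rw [hpp]; abel
      have hpppr : ⟪pp, pr⟫ = 0 := by rw [real_inner_comm]; exact hppO pr hprK
      rw [hsplit, inner_add_right, hpppr, add_zero, real_inner_self_eq_norm_sq]
    have hppn : (0:ℝ) < ‖pp‖ ^ 2 := pow_pos (norm_pos_iff.mpr hpp0) 2
    set tt : ℝ := ⟪w, η₁ - σ'⟫ / ‖pp‖ ^ 2 with htt
    have hsum : (w - tt • pp) + tt • pp = w := by abel
    have hDb1 : fderiv ℝ b σ' (w - tt • pp) = 0 := by
      apply slice₁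
      · rw [inner_sub_left, real_inner_smul_left, hw1, hppσ, mul_zero, sub_zero]
      · rw [inner_sub_left, real_inner_smul_left, hppy₁, htt]
        field_simp
        ring
      · rw [inner_sub_left, real_inner_smul_left, hw2, hppν, mul_zero, sub_zero]
    calc fderiv ℝ b σ' w = fderiv ℝ b σ' ((w - tt • pp) + tt • pp) := by rw [hsum]
      _ = fderiv ℝ b σ' (w - tt • pp) + fderiv ℝ b σ' (tt • pp) :=
          (fderiv ℝ b σ').map_add _ _
      _ = 0 := by rw [hDb1, (fderiv ℝ b σ').map_smul, hDbpp, smul_zero, zero_add]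
  have hrad : fderiv ℝ b σ' σ' = 0 := fderiv_radial hk0 hχ0 hχ1 hν hσ hb hb1
  set pv : Euc d := ν - (⟪ν, σ'⟫ / ‖σ'‖ ^ 2) • σ' with hpv
  have hpvσ : ⟪pv, σ'⟫ = 0 := by
    rw [hpv, inner_sub_left, real_inner_smul_left, hσσ]
    field_simp
    ring
  by_cases hpv0 : pv = 0
  · refine ⟨0, fun x => ?_⟩
    rw [hpv0, inner_zero_left]
    have hνspan : ν = (⟪ν, σ'⟫ / ‖σ'‖ ^ 2) • σ' := by rwa [sub_eq_zero] at hpv0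
    set a : ℝ := ⟪x, σ'⟫ / ‖σ'‖ ^ 2 with ha
    have hw1 : ⟪x - a • σ', σ'⟫ = 0 := by
      rw [inner_sub_left, real_inner_smul_left, hσσ, ha]
      field_simp
      ring
    have hw2 : ⟪x - a • σ', ν⟫ = 0 := by
      rw [hνspan, real_inner_smul_right, hw1, mul_zero]
    have hsum : (x - a • σ') + a • σ' = x := by abel
    have hx0 : fderiv ℝ b σ' x = 0 := by
      calc fderiv ℝ b σ' x = fderiv ℝ b σ' ((x - a • σ') + a • σ') := by rw [hsum]
        _ = fderiv ℝ b σ' (x - a • σ') + fderiv ℝ b σ' (a • σ') :=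
            (fderiv ℝ b σ').map_add _ _
        _ = 0 := by rw [vperp _ hw1 hw2, (fderiv ℝ b σ').map_smul, hrad, smul_zero, zero_add]
    rw [hx0]
    simp
  · have hpvn : (0:ℝ) < ‖pv‖ ^ 2 := pow_pos (norm_pos_iff.mpr hpv0) 2
    have hpvν : ⟪pv, ν⟫ = ‖pv‖ ^ 2 := by
      have h1 : ‖pv‖ ^ 2 = ⟪pv, pv⟫ := (real_inner_self_eq_norm_sq pv).symm
      rw [h1, hpv]
      rw [inner_sub_right, real_inner_smul_right]
      rw [show ⟪ν - (⟪ν, σ'⟫ / ‖σ'‖ ^ 2) • σ', σ'⟫ = ⟪pv, σ'⟫ from rfl, hpvσ, mul_zero, sub_zero]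
    refine ⟨fderiv ℝ b σ' pv / ((‖pv‖ ^ 2 : ℝ) : ℂ), fun x => ?_⟩
    set s : ℝ := ⟪pv, x⟫ / ‖pv‖ ^ 2 with hs
    set a : ℝ := ⟪x, σ'⟫ / ‖σ'‖ ^ 2 with ha
    set w : Euc d := x - a • σ' - s • pv with hw
    have hw1 : ⟪w, σ'⟫ = 0 := by
      rw [hw, inner_sub_left, inner_sub_left, real_inner_smul_left, real_inner_smul_left,
        hσσ, hpvσ, ha]
      field_simp
      ring
    have hw2 : ⟪w, ν⟫ = 0 := by
      have c1 : ⟪w, ν⟫ = ⟪x, ν⟫ - a * ⟪σ', ν⟫ - s * ⟪pv, ν⟫ := by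
        rw [hw, inner_sub_left, inner_sub_left, real_inner_smul_left, real_inner_smul_left]
      have c2 : s * ⟪pv, ν⟫ = ⟪pv, x⟫ := by rw [hpvν, hs]; field_simp
      have c3 : ⟪pv, x⟫ = ⟪ν, x⟫ - ⟪ν, σ'⟫ / ‖σ'‖ ^ 2 * ⟪σ', x⟫ := by
        rw [hpv, inner_sub_left, real_inner_smul_left]
      rw [c1, c2, c3, ha, real_inner_comm σ' ν, real_inner_comm σ' x, real_inner_comm x ν]
      ring
    have hsum : (w + a • σ') + s • pv = x := by rw [hw]; abel
    have hDx : fderiv ℝ b σ' x = s • fderiv ℝ b σ' pv := by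
      calc fderiv ℝ b σ' x = fderiv ℝ b σ' ((w + a • σ') + s • pv) := by rw [hsum]
        _ = (fderiv ℝ b σ' w + fderiv ℝ b σ' (a • σ')) + fderiv ℝ b σ' (s • pv) := by
            rw [(fderiv ℝ b σ').map_add, (fderiv ℝ b σ').map_add]
        _ = s • fderiv ℝ b σ' pv := by
            rw [vperp _ hw1 hw2, (fderiv ℝ b σ').map_smul, hrad, smul_zero, add_zero,
              zero_add, (fderiv ℝ b σ').map_smul]
    rw [hDx, Complex.real_smul, hs]
    push_cast
    ring
end Aux5

/-- in dimension `> 3`, every continuous solution vanishes on `Y1 ∪ Y2`. -/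
theorem stmt9 {d : ℕ} (hd : 3 < d) (k0 : ℝ) (hk0 : 0 < k0)
    (ν ω : Euc d) (hν : ‖ν‖ = 1) (hω : ‖ω‖ = 1)
    (e : Euc d) (he : e = eLast d (by omega))
    (χ : ℝ) (hχ : χ ∈ Set.Ioo (0 : ℝ) 1)
    (b : Euc d → ℂ) (hb : BHyp k0 χ ν ω b)
    (hb1 : ContDiffOn ℝ 1 b (Sig2chi k0 χ ν ω))
    (hdense : Sig2 k0 ν ω ⊆ closure {σ | σ ∈ Sig2 k0 ν ω ∧
      ¬∃ c : ℂ, ∀ x : Euc d,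
        fderiv ℝ b σ x = c * ((⟪ν - (⟪ν, σ⟫ / ‖σ‖ ^ 2) • σ, x⟫ : ℝ) : ℂ)})
    (g : Euc d → ℂ) (hgc : Continuous g) (hg : SolvesHom k0 ν ω e b g) :
    ∀ y ∈ Y1set k0 ν ω e ∪ Y2set k0 ν ω e, g y = 0 := by
  obtain ⟨hχ0, hχ1⟩ := hχ
  intro y hy
  rcases hy with h | h
  · obtain ⟨η, hη, σ, hσ1, rfl⟩ := h
    exact (hg η hη).1 σ hσ1
  · obtain ⟨η, hη, σ, hσ2, rfl⟩ := h
    set bad : Set (Euc d) := {σ0 | σ0 ∈ Sig2 k0 ν ω ∧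
      ¬∃ c : ℂ, ∀ x : Euc d,
        fderiv ℝ b σ0 x = c * ((⟪ν - (⟪ν, σ0⟫ / ‖σ0‖ ^ 2) • σ0, x⟫ : ℝ) : ℂ)} with hbad
    have key : Set.EqOn (fun τ : Euc d => g (η - τ)) (fun _ => (0 : ℂ)) bad := by
      rintro τ ⟨hτ2, hτbad⟩
      by_contra hne
      exact hτbad (active_good hd hk0 hχ0 hχ1 hν hb hb1 hgc hg hτ2 ⟨η, hη, hne⟩)
    have hcont : Continuous fun τ : Euc d => g (η - τ) :=
      hgc.comp (continuous_const.sub continuous_id)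
    exact key.closure hcont continuous_const (hdense hσ2)
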